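/- arXiv:math/0110339 — 3 statements merged into one kernel-verified Lean document; each statement's English description precedes it below -/
import Mathlib

section
/- For real parameters t, e, d, n with n ≥ 1, the integral over the cone C_n = {z ∈ ℝⁿ : z₁ > z₂ > ... > z_n > 0} of ∏_{i=1}^n z_i^e (1+z_i²)^t · ∏_{1≤i<j≤n} (z_i² - z_j²)^d dz is finite whenever d and e are nonnegative integers and 2t + e + 2d(n-1) < -1. -/
open MeasureTheory Finset

/-- The open cone `C_n = {z ∈ ℝⁿ : z₁ > z₂ > ⋯ > z_n > 0}`. -/
def cone (n : ℕ) : Set (Fin n → ℝ) :=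
  {z | (∀ i j : Fin n, i < j → z j < z i) ∧ ∀ i, 0 < z i}

lemma aux_cont (m : ℕ) (t : ℝ) : Continuous (fun x : ℝ => x ^ m * (1 + x ^ 2) ^ t) := by
  apply (continuous_pow m).mul
  apply Continuous.rpow_const (by continuity)
  intro x; left; nlinarith [sq_nonneg x]

lemma aux1d (m : ℕ) (t : ℝ) (h : 2 * t + (m : ℝ) < -1) :
    IntegrableOn (fun x : ℝ => x ^ m * (1 + x ^ 2) ^ t) (Set.Ioi 0) := by
  have hcont := aux_cont m t
  have ht : t ≤ 0 := by nlinarith [Nat.cast_nonneg (α := ℝ) m]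
  have h1 : IntegrableOn (fun x : ℝ => x ^ m * (1 + x ^ 2) ^ t) (Set.Ioc 0 1) :=
    (hcont.integrableOn_Icc (a := 0) (b := 1)).mono_set Set.Ioc_subset_Icc_self
  have h2 : IntegrableOn (fun x : ℝ => x ^ m * (1 + x ^ 2) ^ t) (Set.Ioi 1) := by
    have hint : IntegrableOn (fun x : ℝ => x ^ ((m : ℝ) + 2 * t)) (Set.Ioi 1) :=
      integrableOn_Ioi_rpow_of_lt (by linarith) one_pos
    apply Integrable.mono' hint hcont.aestronglyMeasurable.restrict
    filter_upwards [ae_restrict_mem measurableSet_Ioi] with x hx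
    have hx1 : (1 : ℝ) < x := hx
    have hx0 : (0 : ℝ) < x := by linarith
    rw [Real.norm_eq_abs, abs_mul, abs_pow, abs_of_pos hx0,
      abs_of_pos (Real.rpow_pos_of_pos (by nlinarith) t)]
    have hb : (1 + x ^ 2) ^ t ≤ (x ^ 2) ^ t :=
      Real.rpow_le_rpow_of_nonpos (by positivity) (by nlinarith) ht
    calc x ^ m * (1 + x ^ 2) ^ t ≤ x ^ m * (x ^ 2) ^ t :=
          mul_le_mul_of_nonneg_left hb (by positivity)
      _ = x ^ ((m : ℝ) + 2 * t) := by
          rw [← Real.rpow_natCast x m, ← Real.rpow_natCast x 2, ← Real.rpow_mul hx0.le,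
            ← Real.rpow_add hx0]
          norm_num [mul_comm]
  have := h1.union h2
  rwa [Set.Ioc_union_Ioi_eq_Ioi (le_of_lt one_pos)] at this

lemma cone_measurable (n : ℕ) : MeasurableSet (cone n) := by
  have : cone n = (⋂ i, ⋂ j, ⋂ _h : i < j, {z : Fin n → ℝ | z j < z i}) ∩
      ⋂ i, {z : Fin n → ℝ | 0 < z i} := by
    ext z; simp [cone, Set.mem_iInter]
  rw [this]
  exact (MeasurableSet.iInter fun i => .iInter fun j => .iInter fun _ =>
      measurableSet_lt (measurable_pi_apply j) (measurable_pi_apply i)).inter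
    (.iInter fun i => measurableSet_lt measurable_const (measurable_pi_apply i))

/-- For real `t` and nonnegative integers `d`, `e`, with `n ≥ 1`, the integral over the cone
`C_n` of `∏ᵢ zᵢ^e (1+zᵢ²)^t ∏_{i<j} (zᵢ² - zⱼ²)^d dz` is finite whenever
`2t + e + 2d(n-1) < -1`. -/
theorem integrable_on_cone (n : ℕ) (hn : 1 ≤ n) (d e : ℕ) (t : ℝ)
    (h : 2 * t + (e : ℝ) + 2 * (d : ℝ) * ((n : ℝ) - 1) < -1) :
    IntegrableOn
      (fun z : Fin n → ℝ =>
        (∏ i, z i ^ e * (1 + z i ^ 2) ^ t) *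
          ∏ i, ∏ j ∈ Finset.univ.filter (fun j => i < j), (z i ^ 2 - z j ^ 2) ^ d)
      (cone n) volume := by
  classical
  set c : Fin n → ℕ := fun i => (Finset.univ.filter (fun j => i < j)).card with hc
  have hcle : ∀ i, (c i : ℝ) ≤ (n : ℝ) - 1 := by
    intro i
    have hsub : (Finset.univ.filter (fun j => i < j)) ⊆ Finset.univ.erase i := by
      intro j hj
      simp only [mem_filter, mem_univ, true_and] at hj
      exact Finset.mem_erase.mpr ⟨hj.ne', mem_univ j⟩
    have h1 : c i ≤ n - 1 := by
      calc c i ≤ (Finset.univ.erase i).card := card_le_card hsub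
        _ = n - 1 := by simp [Finset.card_erase_of_mem]
    have h2 : ((c i : ℕ) : ℝ) ≤ ((n - 1 : ℕ) : ℝ) := Nat.cast_le.mpr h1
    rwa [Nat.cast_sub hn, Nat.cast_one] at h2
  set f : Fin n → ℝ → ℝ := fun i x => x ^ (e + 2 * d * c i) * (1 + x ^ 2) ^ t with hf
  have hfint : ∀ i, IntegrableOn (f i) (Set.Ioi 0) := by
    intro i
    apply aux1d
    have hd : (0 : ℝ) ≤ (d : ℝ) := Nat.cast_nonneg d
    have hci : (0 : ℝ) ≤ (c i : ℝ) := Nat.cast_nonneg _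
    push_cast
    nlinarith [hcle i]
  set F : Fin n → ℝ → ℝ := fun i => (Set.Ioi (0:ℝ)).indicator (f i) with hF
  have hFint : ∀ i, Integrable (F i) := fun i =>
    (integrable_indicator_iff measurableSet_Ioi).mpr (hfint i)
  have hG : Integrable (fun z : Fin n → ℝ => ∏ i, F i (z i)) :=
    Integrable.fin_nat_prod (𝕜 := ℝ) hFint
  apply Integrable.mono' hG.integrableOn
  · apply Continuous.aestronglyMeasurable ?_ |>.restrict
    apply Continuous.mul
    · exact continuous_finset_prod _ fun i _ => (aux_cont e t).comp (continuous_apply i)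
    · exact continuous_finset_prod _ fun i _ => continuous_finset_prod _ fun j _ =>
        (((continuous_apply i).pow 2).sub ((continuous_apply j).pow 2)).pow d
  · filter_upwards [ae_restrict_mem (cone_measurable n)] with z hz
    obtain ⟨hord, hpos⟩ := hz
    have hzi2 : ∀ i j : Fin n, i < j → 0 < z i ^ 2 - z j ^ 2 := by
      intro i j hij
      have := hord i j hij
      have := hpos j
      nlinarith
    have hnn : (0:ℝ) ≤ (∏ i, z i ^ e * (1 + z i ^ 2) ^ t) *
        ∏ i, ∏ j ∈ Finset.univ.filter (fun j => i < j), (z i ^ 2 - z j ^ 2) ^ d := by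
      apply mul_nonneg
      · exact Finset.prod_nonneg fun i _ => mul_nonneg (pow_nonneg (hpos i).le _)
          (Real.rpow_nonneg (by nlinarith [sq_nonneg (z i)]) t)
      · exact Finset.prod_nonneg fun i _ => Finset.prod_nonneg fun j hj =>
          pow_nonneg (hzi2 i j (by simpa using hj)).le _
    rw [Real.norm_eq_abs, abs_of_nonneg hnn]
    have hFz : ∀ i, F i (z i) = f i (z i) := fun i => Set.indicator_of_mem (hpos i) _
    simp only [hFz]
    rw [← Finset.prod_mul_distrib]
    apply Finset.prod_le_prod
    · intro i _
      exact mul_nonneg (mul_nonneg (pow_nonneg (hpos i).le _)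
          (Real.rpow_nonneg (by nlinarith [sq_nonneg (z i)]) t))
        (Finset.prod_nonneg fun j hj => pow_nonneg (hzi2 i j (by simpa using hj)).le _)
    · intro i _
      have hstep : ∏ j ∈ Finset.univ.filter (fun j => i < j), (z i ^ 2 - z j ^ 2) ^ d ≤
          ∏ j ∈ Finset.univ.filter (fun j => i < j), (z i ^ 2) ^ d := by
        apply Finset.prod_le_prod
        · intro j hj; exact pow_nonneg (hzi2 i j (by simpa using hj)).le _
        · intro j hj
          apply pow_le_pow_left₀ (hzi2 i j (by simpa using hj)).le
          nlinarith [sq_nonneg (z j), hpos j]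
      calc z i ^ e * (1 + z i ^ 2) ^ t *
            ∏ j ∈ Finset.univ.filter (fun j => i < j), (z i ^ 2 - z j ^ 2) ^ d
          ≤ z i ^ e * (1 + z i ^ 2) ^ t *
            ∏ j ∈ Finset.univ.filter (fun j => i < j), (z i ^ 2) ^ d := by
            apply mul_le_mul_of_nonneg_left hstep
            exact mul_nonneg (pow_nonneg (hpos i).le _)
              (Real.rpow_nonneg (by nlinarith [sq_nonneg (z i)]) t)
        _ = f i (z i) := by
            simp only [hf, ← hc]
            rw [Finset.prod_const, ← pow_mul, ← pow_mul, pow_add, mul_assoc 2 d (c i)]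
            ring
end

section
/- Let A be a Lie group acting on a smooth manifold X with regular measures, and suppose a regular measure dx on X is χ-equivariant, i.e. g_*dx = χ(g)dx for a positive multiplicative character χ : A → ℝ₊. Then for every x ∈ X and every g in the stabilizer A^x, one has χ(g)⁻¹ = |det(Ad g acting on 𝔞/𝔞^x)|, where 𝔞^x is the Lie algebra of A^x. -/
/-!
By the change of variables formula, pushing `ρ dλ` forward by the diffeomorphism `act g` gives
the density `|det D(act g⁻¹)| · ρ ∘ act g⁻¹`. Equivariance says that this measure is also
`χ(g) ρ dλ`, and two continuous densities of the same measure agree everywhere. At the fixed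
point `x` the factor `ρ x > 0` cancels, and the chain rule gives
`det D(act g⁻¹)(x) = (det D(act g)(x))⁻¹`.
-/

open MeasureTheory Function
open scoped ENNReal

theorem map_withDensity_eq_withDensity_abs_det_fderiv_mul {E : Type*} [NormedAddCommGroup E]
    [NormedSpace ℝ E] [FiniteDimensional ℝ E] [MeasurableSpace E] [BorelSpace E]
    (μ : Measure E) [μ.IsAddHaarMeasure] {f h : E → E} (hf : Measurable f)
    (hfh : LeftInverse f h) (hhf : LeftInverse h f) (hh : Differentiable ℝ h) (ρ : E → ℝ≥0∞) :
    (μ.withDensity ρ).map f =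
      μ.withDensity fun y => ENNReal.ofReal |(fderiv ℝ h y).det| * ρ (h y) := by
  ext s hs
  rw [Measure.map_apply hf hs, withDensity_apply _ (hf hs), withDensity_apply _ hs,
    ← Set.image_eq_preimage_of_inverse hfh hhf,
    lintegral_image_eq_lintegral_abs_det_fderiv_mul μ hs
      (fun y _ => (hh y).hasFDerivAt.hasFDerivWithinAt) hfh.injective.injOn]

theorem Continuous.eq_of_withDensity_eq {X : Type*} [TopologicalSpace X] [MeasurableSpace X]
    [OpensMeasurableSpace X] {μ : Measure X} [μ.IsOpenPosMeasure] [SigmaFinite μ]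
    {f g : X → ℝ≥0∞} (hf : Continuous f) (hg : Continuous g)
    (hfg : μ.withDensity f = μ.withDensity g) : f = g :=
  (hf.ae_eq_iff_eq μ hg).1
    ((withDensity_eq_iff_of_sigmaFinite hf.aemeasurable hg.aemeasurable).1 hfg)

theorem abs_det_fderiv_mul_comp_eq_of_map_withDensity_eq_smul {E : Type*} [NormedAddCommGroup E]
    [NormedSpace ℝ E] [FiniteDimensional ℝ E] [MeasurableSpace E] [BorelSpace E]
    (μ : Measure E) [μ.IsAddHaarMeasure] {f h : E → E} (hf : Continuous f)
    (hfh : LeftInverse f h) (hhf : LeftInverse h f) (hh : ContDiff ℝ 1 h) {ρ : E → ℝ}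
    (hρ : Continuous ρ) (hρ_nonneg : ∀ y, 0 ≤ ρ y) {c : ℝ} (hc : 0 ≤ c)
    (hmap : (μ.withDensity fun y => ENNReal.ofReal (ρ y)).map f =
      ENNReal.ofReal c • μ.withDensity fun y => ENNReal.ofReal (ρ y)) (y : E) :
    |(fderiv ℝ h y).det| * ρ (h y) = c * ρ y := by
  have hdensity : (μ.withDensity fun y =>
      ENNReal.ofReal (|(fderiv ℝ h y).det| * ρ (h y))) =
      μ.withDensity fun y => ENNReal.ofReal (c * ρ y) := by
    simp_rw [ENNReal.ofReal_mul (abs_nonneg _), ENNReal.ofReal_mul hc]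
    rw [← map_withDensity_eq_withDensity_abs_det_fderiv_mul μ hf.measurable hfh hhf
      (hh.differentiable one_ne_zero) (fun y => ENNReal.ofReal (ρ y)), hmap,
      ← withDensity_smul' _ _ ENNReal.ofReal_ne_top]
    rfl
  have hdet_cont := (ContinuousLinearMap.continuous_det.comp (hh.continuous_fderiv one_ne_zero)).abs
  have := congrFun (Continuous.eq_of_withDensity_eq
    (ENNReal.continuous_ofReal.comp (hdet_cont.mul (hρ.comp hh.continuous)))
    (ENNReal.continuous_ofReal.comp (continuous_const.mul hρ)) hdensity) y
  simp only [Pi.mul_apply, comp_apply] at this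
  rwa [ENNReal.ofReal_eq_ofReal_iff (mul_nonneg (abs_nonneg _) (hρ_nonneg _))
    (mul_nonneg hc (hρ_nonneg y))] at this

theorem det_fderiv_mul_det_fderiv_of_leftInverse {𝕜 E : Type*} [NontriviallyNormedField 𝕜]
    [NormedAddCommGroup E] [NormedSpace 𝕜 E] {f h : E → E} {x : E}
    (hfh : LeftInverse f h) (hf : DifferentiableAt 𝕜 f x)
    (hh : DifferentiableAt 𝕜 h x) (hx : h x = x) :
    (fderiv 𝕜 f x).det * (fderiv 𝕜 h x).det = 1 := by
  have hf' : HasFDerivAt f (fderiv 𝕜 f x) (h x) := by rw [hx]; exact hf.hasFDerivAt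
  have hcomp := hf'.comp x hh.hasFDerivAt
  rw [hfh.comp_eq_id] at hcomp
  rw [ContinuousLinearMap.det, ContinuousLinearMap.det, ← LinearMap.det_comp]
  change LinearMap.det ((fderiv 𝕜 f x).comp (fderiv 𝕜 h x) : E →ₗ[𝕜] E) = 1
  rw [hcomp.unique (hasFDerivAt_id x), ContinuousLinearMap.coe_id, LinearMap.det_id]

-- The differential of `act g` at its fixed point `x` models `Ad g` acting on `T_x X = 𝔞/𝔞^x`.
theorem equivariant_measure_stabilizer_det_general (m : ℕ) {A : Type*} [Group A]
    (act : A → (Fin m → ℝ) → (Fin m → ℝ))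
    (hact_one : act 1 = id)
    (hact_mul : ∀ g h : A, act (g * h) = act g ∘ act h)
    (hact_smooth : ∀ g : A, ContDiff ℝ 1 (act g))
    (ρ : (Fin m → ℝ) → ℝ) (hρ_cont : Continuous ρ) (hρ_pos : ∀ x, 0 < ρ x)
    (χ : A → ℝ) (hχ_pos : ∀ g, 0 < χ g)
    (hequiv : ∀ g : A,
      Measure.map (act g) (volume.withDensity fun x => ENNReal.ofReal (ρ x)) =
        ENNReal.ofReal (χ g) • volume.withDensity fun x => ENNReal.ofReal (ρ x))
    (g : A) (x : Fin m → ℝ) (hfix : act g x = x) :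
    (χ g)⁻¹ = |(fderiv ℝ (act g) x).det| := by
  have hleft : ∀ a b : A, a * b = 1 → LeftInverse (act a) (act b) := fun a b hab y => by
    rw [← comp_apply (f := act a), ← hact_mul, hab, hact_one, id]
  have hinv := hleft g g⁻¹ (mul_inv_cancel g)
  have hinv' := hleft g⁻¹ g (inv_mul_cancel g)
  have hfix' : act g⁻¹ x = x := by simpa only [hfix] using hinv' x
  have hh := hact_smooth g⁻¹
  have hdensity := abs_det_fderiv_mul_comp_eq_of_map_withDensity_eq_smul volume
    (hact_smooth g).continuous hinv hinv' hh hρ_cont (fun y => (hρ_pos y).le) (hχ_pos g).le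
    (hequiv g) x
  rw [hfix'] at hdensity
  have hdet : |(fderiv ℝ (act g⁻¹) x).det| = χ g := mul_right_cancel₀ (hρ_pos x).ne' hdensity
  rw [← hdet, ← abs_inv, inv_eq_of_mul_eq_one_left (det_fderiv_mul_det_fderiv_of_leftInverse hinv
    ((hact_smooth g).differentiable one_ne_zero x) (hh.differentiable one_ne_zero x) hfix')]

/-- Necessity of the equivariance condition: if a group `A` acts smoothly on `X = ℝ^m` and a
regular measure `dx = ρ dλ` (with `ρ` a positive continuous density) is `χ`-equivariant, i.e.
`g_* dx = χ(g) dx`, then for every point `x` and every `g` in the stabilizer of `x` one has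
`χ(g)⁻¹ = |det D(act g)(x)|`.  (The differential at the fixed point realizes the action of
`Ad g` on the tangent space `𝔞/𝔞^x`.) -/
theorem equivariant_measure_stabilizer_det (m : ℕ) {A : Type*} [Group A]
    (act : A → (Fin m → ℝ) → (Fin m → ℝ))
    (hact_one : act 1 = id)
    (hact_mul : ∀ g h : A, act (g * h) = act g ∘ act h)
    (hact_smooth : ∀ g : A, ContDiff ℝ 1 (act g))
    (ρ : (Fin m → ℝ) → ℝ) (hρ_cont : Continuous ρ) (hρ_pos : ∀ x, 0 < ρ x)
    (χ : A → ℝ) (hχ_pos : ∀ g, 0 < χ g) (hχ_mul : ∀ g h : A, χ (g * h) = χ g * χ h)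
    (hequiv : ∀ g : A,
      Measure.map (act g) (volume.withDensity fun x => ENNReal.ofReal (ρ x)) =
        ENNReal.ofReal (χ g) • volume.withDensity fun x => ENNReal.ofReal (ρ x))
    (g : A) (x : Fin m → ℝ) (hfix : act g x = x) :
    (χ g)⁻¹ = |(fderiv ℝ (act g) x).det| :=
  equivariant_measure_stabilizer_det_general m act hact_one hact_mul hact_smooth ρ hρ_cont hρ_pos χ
    hχ_pos hequiv g x hfix
end

section
/- Let V be the complex vector space of polynomials on n×n complex symmetric matrices spanned by all minors of the matrix x (including the constant 1 and det(x)). Then V is invariant under every transformation of the form p(x) ↦ p(c + a x aᵗ) for a ∈ GL_n(ℂ) and c symmetric, and under p(x) ↦ det(x) p(-x⁻¹). -/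
open Matrix Finset

noncomputable section

/-- The `(I, J)`-minor of a square matrix (rows `I`, columns `J` in increasing order). -/
def fminor {n : ℕ} (x : Matrix (Fin n) (Fin n) ℂ)
    (I J : Finset (Fin n)) (h : I.card = J.card) : ℂ :=
  Matrix.det (Matrix.of fun a b : Fin I.card =>
    x ((I.orderIsoOfFin rfl a : Fin n)) ((J.orderIsoOfFin h.symm b : Fin n)))

/-- The space `V` of polynomial functions on `n × n` complex matrices spanned by all minors of
the matrix `x` (including the constant `1` and `det x`). -/
def minorSpan (n : ℕ) : Submodule ℂ (Matrix (Fin n) (Fin n) ℂ → ℂ) :=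
  Submodule.span ℂ
    {f | ∃ (I J : Finset (Fin n)) (h : I.card = J.card), f = fun x => fminor x I J h}

/-! Both transformations are linear in `p`, so it suffices to treat a single minor. A minor of
`c + a x b` has the form `det (C + A x B)`, and by the Schur complement
`det (C + A x B) = det [[1, -x B], [A, C]]`; likewise `det x · det ((-x⁻¹)_{IJ})` is the
determinant of `[[x, E_J], [E_Iᵀ, 0]]` for coordinate selections `E_I`, `E_J`. In both block
matrices the first `n` rows are `u i + L (x i)` and the others are constant. Expanding the
determinant multilinearly over the set `S` of rows where the `x`-part is chosen leaves alternating
forms in the rows `x i`, `i ∈ S`, and every alternating `k`-form on `ℂⁿ` is a combination of the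
`k × k` minors, these being the coordinates of `⋀ᵏ ℂⁿ`. -/

namespace AlternatingMap

variable {R M N ι : Type*} [Semiring R] [AddCommMonoid M] [Module R M]
  [AddCommMonoid N] [Module R N]

def domDomRestrict (f : M [⋀^ι]→ₗ[R] N) (P : ι → Prop) [DecidablePred P]
    (z : {a // ¬ P a} → M) : M [⋀^{a // P a}]→ₗ[R] N where
  toMultilinearMap := f.toMultilinearMap.domDomRestrict P z
  map_eq_zero_of_eq' v i j hv hij := by
    refine f.map_eq_zero_of_eq _ (i := i.1) (j := j.1) ?_ (Subtype.coe_injective.ne hij)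
    simp [i.2, j.2, hv]

@[simp]
theorem domDomRestrict_apply (f : M [⋀^ι]→ₗ[R] N) (P : ι → Prop) [DecidablePred P]
    (z : {a // ¬ P a} → M) (v : {a // P a} → M) :
    f.domDomRestrict P z v = f fun j => if h : P j then v ⟨j, h⟩ else z ⟨j, h⟩ :=
  rfl

end AlternatingMap

open exteriorPower in
theorem alternatingMap_apply_rows_mem_minorSpan {n : ℕ} (S : Finset (Fin n))
    (Ψ : (Fin n → ℂ) [⋀^S]→ₗ[ℂ] ℂ) :
    (fun x : Matrix (Fin n) (Fin n) ℂ => Ψ fun i => x i) ∈ minorSpan n := by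
  let Ψ' := Ψ.domDomCongr (S.orderIsoOfFin rfl).symm.toEquiv
  let φ := alternatingMapLinearEquiv Ψ'
  let B := (Pi.basisFun ℂ (Fin n)).exteriorPower S.card
  have hΨ : ∀ x : Matrix (Fin n) (Fin n) ℂ, (Ψ fun i => x i) =
      ∑ T, φ (B T) * fminor x S T.1 T.2.symm := by
    intro x
    have hrows : (Ψ fun i => x i) = φ (ιMulti ℂ _ fun a => x (S.orderIsoOfFin rfl a)) := by
      simp only [φ, Ψ', alternatingMapLinearEquiv_apply_ιMulti, AlternatingMap.domDomCongr_apply]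
      congr 1
      funext i
      simp [-Finset.coe_orderIsoOfFin_apply]
    rw [hrows, ← B.sum_repr (ιMulti ℂ _ _), map_sum]
    refine Finset.sum_congr rfl fun T _ => ?_
    rw [map_smul, smul_eq_mul, mul_comm, basis_repr_apply, ιMultiDual_apply_ιMulti]
    simp [fminor, Set.powersetCard.ofFinEmbEquiv_symm_apply]
  have hsum : (fun x : Matrix (Fin n) (Fin n) ℂ => Ψ fun i => x i) =
      ∑ T, φ (B T) • fun x => fminor x S T.1 T.2.symm := by
    ext x
    simp [hΨ]
  rw [hsum]
  exact Submodule.sum_mem _ fun T _ =>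
    Submodule.smul_mem _ _ (Submodule.subset_span ⟨S, T.1, T.2.symm, rfl⟩)

theorem alternatingMap_apply_affine_rows_mem_minorSpan {n : ℕ} {M : Type*} [AddCommGroup M]
    [Module ℂ M] (Φ : M [⋀^Fin n]→ₗ[ℂ] ℂ) (u : Fin n → M) (L : (Fin n → ℂ) →ₗ[ℂ] M) :
    (fun x : Matrix (Fin n) (Fin n) ℂ => Φ fun i => u i + L (x i)) ∈ minorSpan n := by
  have hsum : (fun x : Matrix (Fin n) (Fin n) ℂ => Φ fun i => u i + L (x i)) =
      ∑ S : Finset (Fin n), fun x => ((Φ.domDomRestrict (· ∈ S) fun i => u i).compLinearMap L)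
        fun i => x i := by
    ext x
    have h := Φ.map_add_univ (fun i => L (x i)) u
    simp only [Pi.add_def, add_comm (L _)] at h
    rw [h, Finset.sum_apply]
    refine Finset.sum_congr rfl fun S _ => ?_
    simp only [AlternatingMap.compLinearMap_apply, AlternatingMap.domDomRestrict_apply, dite_eq_ite]
    rfl
  rw [hsum]
  exact Submodule.sum_mem _ fun S _ => alternatingMap_apply_rows_mem_minorSpan S _

theorem det_fromRows_add_mul_mem_minorSpan {n : ℕ} {κ : Type*} [Fintype κ] [DecidableEq κ]
    (U V : Matrix (Fin n) (Fin n ⊕ κ) ℂ) (W : Matrix κ (Fin n ⊕ κ) ℂ) :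
    (fun x : Matrix (Fin n) (Fin n) ℂ => (fromRows (U + x * V) W).det) ∈ minorSpan n := by
  let Φ := (detRowAlternating.domDomRestrict (fun a => a.isLeft)
    fun a => fromRows 0 W a.1).domDomCongr Equiv.sumIsLeft
  have hΦ : ∀ x : Matrix (Fin n) (Fin n) ℂ,
      (fromRows (U + x * V) W).det = Φ fun i => U i + vecMulLinear V (x i) := by
    intro x
    simp only [Φ, AlternatingMap.domDomCongr_apply, AlternatingMap.domDomRestrict_apply]
    congr 1
    ext (i | j) c <;> rfl
  simp_rw [hΦ]
  exact alternatingMap_apply_affine_rows_mem_minorSpan Φ _ _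

theorem det_add_mul_mul_mem_minorSpan {n : ℕ} {κ : Type*} [Fintype κ] [DecidableEq κ]
    (C : Matrix κ κ ℂ) (A : Matrix κ (Fin n) ℂ) (B : Matrix (Fin n) κ ℂ) :
    (fun x : Matrix (Fin n) (Fin n) ℂ => (C + A * x * B).det) ∈ minorSpan n := by
  have h : ∀ x : Matrix (Fin n) (Fin n) ℂ, (C + A * x * B).det =
      (fromRows (fromCols 1 0 + x * fromCols 0 (-B)) (fromCols A C)).det := by
    intro x
    have hblock : fromRows (fromCols 1 0 + x * fromCols 0 (-B)) (fromCols A C) =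
        fromBlocks 1 (-(x * B)) A C := by
      ext (i | i) (j | j) <;> simp
    rw [hblock, det_fromBlocks_one₁₁, Matrix.mul_neg, sub_neg_eq_add, Matrix.mul_assoc]
  simp_rw [h]
  exact det_fromRows_add_mul_mem_minorSpan _ _ _

theorem Matrix.submatrix_mul_mul {l m n o : Type*} [Fintype m] [Fintype n] {R : Type*}
    [Mul R] [AddCommMonoid R] (a : Matrix l m R) (x : Matrix m n R) (b : Matrix n o R)
    {l' o' : Type*} (r : l' → l) (s : o' → o) :
    (a * x * b).submatrix r s = a.submatrix r id * x * b.submatrix id s := by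
  rw [submatrix_mul _ _ r id s Function.bijective_id,
    submatrix_mul _ _ r id id Function.bijective_id, submatrix_id_id]

theorem fminor_add_mul_mul_mem_minorSpan {n : ℕ} (a b c : Matrix (Fin n) (Fin n) ℂ)
    (I J : Finset (Fin n)) (h : I.card = J.card) :
    (fun x => fminor (c + a * x * b) I J h) ∈ minorSpan n := by
  set r := fun i => (I.orderIsoOfFin rfl i : Fin n)
  set s := fun j => (J.orderIsoOfFin h.symm j : Fin n)
  have hminor : ∀ x : Matrix (Fin n) (Fin n) ℂ, fminor (c + a * x * b) I J h =
      (c.submatrix r s + a.submatrix r id * x * b.submatrix id s).det := by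
    intro x
    rw [← Matrix.submatrix_mul_mul]
    rfl
  simp_rw [hminor]
  exact det_add_mul_mul_mem_minorSpan _ _ _

theorem exists_mem_minorSpan_det_mul_fminor_neg_inv {n : ℕ} (I J : Finset (Fin n))
    (h : I.card = J.card) :
    ∃ q ∈ minorSpan n, ∀ x : Matrix (Fin n) (Fin n) ℂ, IsUnit x.det →
      x.det * fminor (-x⁻¹) I J h = q x := by
  set r := fun i => (I.orderIsoOfFin rfl i : Fin n)
  set s := fun j => (J.orderIsoOfFin h.symm j : Fin n)
  set A := (1 : Matrix (Fin n) (Fin n) ℂ).submatrix r id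
  set B := (1 : Matrix (Fin n) (Fin n) ℂ).submatrix id s
  set P := fromRows (1 : Matrix (Fin n) (Fin n) ℂ) (0 : Matrix (Fin I.card) (Fin n) ℂ)
  set Q := fromCols (1 : Matrix (Fin n) (Fin n) ℂ) (0 : Matrix (Fin n) (Fin I.card) ℂ)
  refine ⟨fun x => (fromBlocks 0 B A 0 + P * x * Q).det,
    det_add_mul_mul_mem_minorSpan _ _ _, fun x hx => ?_⟩
  have := x.invertibleOfIsUnitDet hx
  have hblock : fromBlocks 0 B A 0 + P * x * Q = fromBlocks x B A 0 := by
    ext (i | i) (j | j) <;> simp [P, Q]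
  have hminor : (-x⁻¹).submatrix r s = 0 - A * ⅟x * B := by
    rw [zero_sub, invOf_eq_nonsing_inv, ← Matrix.submatrix_mul_mul, Matrix.one_mul,
      Matrix.mul_one]
    rfl
  dsimp only
  rw [hblock, det_fromBlocks₁₁, ← hminor]
  rfl

theorem comp_add_mul_mul_mem_minorSpan {n : ℕ} {p : Matrix (Fin n) (Fin n) ℂ → ℂ}
    (hp : p ∈ minorSpan n) (a b c : Matrix (Fin n) (Fin n) ℂ) :
    (fun x => p (c + a * x * b)) ∈ minorSpan n := by
  have hle : minorSpan n ≤ (minorSpan n).comap (LinearMap.funLeft ℂ ℂ fun x => c + a * x * b) :=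
    Submodule.span_le.2 <| by
      rintro _ ⟨I, J, h, rfl⟩
      exact fminor_add_mul_mul_mem_minorSpan a b c I J h
  exact hle hp

theorem exists_mem_minorSpan_det_mul_neg_inv {n : ℕ} {p : Matrix (Fin n) (Fin n) ℂ → ℂ}
    (hp : p ∈ minorSpan n) :
    ∃ q ∈ minorSpan n, ∀ x : Matrix (Fin n) (Fin n) ℂ, IsUnit x.det →
      x.det * p (-x⁻¹) = q x := by
  -- Restricted to `{x | IsUnit x.det}`, the claim is the linear condition
  -- `res (T p) ∈ (minorSpan n).map res`.
  let res := LinearMap.funLeft ℂ ℂ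
    (Subtype.val : {x : Matrix (Fin n) (Fin n) ℂ // IsUnit x.det} → _)
  let T := LinearMap.mulLeft ℂ (fun x : Matrix (Fin n) (Fin n) ℂ => x.det) ∘ₗ
    LinearMap.funLeft ℂ ℂ fun x => -x⁻¹
  have hle : minorSpan n ≤ ((minorSpan n).map res).comap (res ∘ₗ T) :=
    Submodule.span_le.2 <| by
      rintro _ ⟨I, J, h, rfl⟩
      obtain ⟨q, hq, hdet⟩ := exists_mem_minorSpan_det_mul_fminor_neg_inv I J h
      exact ⟨q, hq, funext fun x => (hdet x x.2).symm⟩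
  obtain ⟨q, hq, hpq⟩ := hle hp
  exact ⟨q, hq, fun x hx => (congrFun hpq ⟨x, hx⟩).symm⟩

/-- The span `V` of all minors is invariant under every transformation
`p(x) ↦ p(c + a x aᵀ)` (`a ∈ GL_n(ℂ)`, `c` symmetric), and under `p(x) ↦ det(x) p(-x⁻¹)`
(on the open set `det x ≠ 0`, the latter agrees with an element of `V`). -/
theorem minorSpan_invariant (n : ℕ) :
    (∀ p ∈ minorSpan n, ∀ a : Matrix (Fin n) (Fin n) ℂ, IsUnit a.det →
      ∀ c : Matrix (Fin n) (Fin n) ℂ, c.IsSymm →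
        (fun x => p (c + a * x * aᵀ)) ∈ minorSpan n) ∧
    (∀ p ∈ minorSpan n, ∃ q ∈ minorSpan n,
      ∀ x : Matrix (Fin n) (Fin n) ℂ, x.IsSymm → IsUnit x.det →
        x.det * p (-x⁻¹) = q x) :=
  ⟨fun _ hp a _ c _ => comp_add_mul_mul_mem_minorSpan hp a aᵀ c, fun _ hp =>
    (exists_mem_minorSpan_det_mul_neg_inv hp).imp fun _ ⟨hq, hpq⟩ => ⟨hq, fun x _ => hpq x⟩⟩

end
end
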